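/- Let V be uniform on a finite set 𝒱 and {P_v} be distributions on a finite set X with uniform mixture U. Let M be any online algorithm on streams of length n whose internal state after each step, as a function of the current input (with all earlier inputs drawn i.i.d. from U), is a randomized map with mutual information at most I₀ with V when the input is drawn from P_V. Then dTV(M(P_V^n), M(U^n)) ≤ n·√(I₀/2). -/

import Mathlib

open Finset

def IsDist {α : Type*} [Fintype α] (p : α → ℝ) : Prop :=
  (∀ x, 0 ≤ p x) ∧ ∑ x, p x = 1

noncomputable def dTV {α : Type*} [Fintype α] (p q : α → ℝ) : ℝ :=
  (1 / 2) * ∑ x, |p x - q x|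

/-- Mutual information (in nats) of a joint distribution on a finite product. -/
noncomputable def mutualInfo {α β : Type*} [Fintype α] [Fintype β]
    (j : α × β → ℝ) : ℝ :=
  ∑ p : α × β,
    if j p = 0 then 0
    else j p * Real.log (j p / ((∑ b, j (p.1, b)) * (∑ a, j (a, p.2))))

/-- The distribution of the internal state of an online algorithm (given by the
randomized maps `M1` for the first input and `Mst i` for the `(i+1)`-st input) after
step `i`, when the inputs are drawn independently with the `j`-th input drawn from
`q j`. -/
noncomputable def stateDist {X S : Type*} [Fintype X] [Fintype S]
    (M1 : X → S → ℝ) (Mst : ℕ → S → X → S → ℝ) (q : ℕ → X → ℝ) : ℕ → S → ℝ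
  | 0 => fun s => ∑ x, q 0 x * M1 x s
  | (i + 1) => fun s =>
      ∑ s', stateDist M1 Mst q i s' * ∑ x, q (i + 1) x * Mst (i + 1) s' x s

/-!
Hybrid argument. In the `k`-th hybrid the first `k` inputs are drawn from `U` and the remaining
ones from `P_v`; hybrid `0` gives `M(P_V^n)` and hybrid `n` gives `M(U^n)`. Two consecutive hybrids
differ only in the law of the `k`-th input. The later steps and the output map are the same
stochastic maps for both, so by data processing and convexity of total variation their distance
is at most the average over `v` of `dTV(law(S_k | V = v), law(S_k))`. By Pinsker's inequality and
Cauchy–Schwarz this average is at most `√(I(S_k; V)/2) ≤ √(I₀/2)`. Pinsker's inequality itself comes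
from the pointwise bound `3 (t - 1)² ≤ 2 (t + 2) (t log t - t + 1)`.
-/

open Real

noncomputable def relEntropy {α : Type*} [Fintype α] (p q : α → ℝ) : ℝ :=
  ∑ x, p x * log (p x / q x)

noncomputable def mixture {α β : Type*} [Fintype α] (p : α → ℝ) (K : α → β → ℝ) : β → ℝ :=
  fun b => ∑ a, p a * K a b

section Mixture

variable {α β γ : Type*} [Fintype α]

lemma isDist_mixture [Fintype β] {p : α → ℝ} {K : α → β → ℝ} (hp : IsDist p)
    (hK : ∀ a, IsDist (K a)) : IsDist (mixture p K) := by
  refine ⟨fun b => sum_nonneg fun a _ => mul_nonneg (hp.1 a) ((hK a).1 b), ?_⟩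
  simp only [mixture]
  rw [sum_comm]
  simp only [← mul_sum, (hK _).2, mul_one, hp.2]

lemma isDist_uniform [Nonempty α] : IsDist (fun _ : α => 1 / (Fintype.card α : ℝ)) :=
  ⟨fun _ => by positivity, by simp⟩

lemma mixture_mixture [Fintype β] (p : α → ℝ) (K : α → β → ℝ) (L : β → γ → ℝ) :
    mixture (mixture p K) L = mixture p (fun a => mixture (K a) L) := by
  funext c
  simp only [mixture, sum_mul, mul_sum, mul_assoc]
  exact sum_comm

lemma mixture_comm [Fintype β] (p : α → ℝ) (r : β → ℝ) (K : α → β → γ → ℝ) :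
    mixture p (fun a => mixture r (K a)) = mixture r (fun b => mixture p (fun a => K a b)) := by
  funext c
  simp only [mixture, mul_sum]
  rw [sum_comm]
  exact sum_congr rfl fun _ _ => sum_congr rfl fun _ _ => by ring

lemma mixture_indicator [DecidableEq α] (a : α) (K : α → β → ℝ) :
    mixture (fun a' => if a' = a then (1 : ℝ) else 0) K = K a := by
  funext b
  simp [mixture]

end Mixture

section TotalVariation

variable {α β : Type*} [Fintype α] [Fintype β]

lemma dTV_triangle (p q r : α → ℝ) : dTV p r ≤ dTV p q + dTV q r := by
  simp only [dTV, ← mul_add, ← sum_add_distrib]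
  gcongr with x
  exact abs_sub_le _ _ _

lemma dTV_le_mul_of_dTV_succ_le (H : ℕ → α → ℝ) (n : ℕ) (ε : ℝ)
    (hH : ∀ k < n, dTV (H k) (H (k + 1)) ≤ ε) : dTV (H 0) (H n) ≤ n * ε := by
  induction n with
  | zero => simp [dTV]
  | succ n ih =>
    calc dTV (H 0) (H (n + 1)) ≤ dTV (H 0) (H n) + dTV (H n) (H (n + 1)) := dTV_triangle _ _ _
      _ ≤ n * ε + ε := add_le_add (ih fun k hk => hH k (by omega)) (hH n (by omega))
      _ = (n + 1 : ℕ) * ε := by push_cast; ring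

lemma dTV_mixture_le (p q : α → ℝ) {K : α → β → ℝ} (hK : ∀ a, IsDist (K a)) :
    dTV (mixture p K) (mixture q K) ≤ dTV p q := by
  unfold dTV mixture
  gcongr 1 / 2 * ?_
  calc ∑ b, |∑ a, p a * K a b - ∑ a, q a * K a b|
      = ∑ b, |∑ a, (p a - q a) * K a b| := by simp only [sub_mul, sum_sub_distrib]
    _ ≤ ∑ b, ∑ a, |p a - q a| * K a b := by
        gcongr with b
        refine (abs_sum_le_sum_abs _ _).trans_eq (sum_congr rfl fun a _ => ?_)
        rw [abs_mul, abs_of_nonneg ((hK a).1 b)]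
    _ = ∑ a, |p a - q a| := by
        rw [sum_comm]
        simp only [← mul_sum, (hK _).2, mul_one]

lemma dTV_mixture_mixture_le {w : α → ℝ} (hw : ∀ a, 0 ≤ w a) (K L : α → β → ℝ) :
    dTV (mixture w K) (mixture w L) ≤ ∑ a, w a * dTV (K a) (L a) := by
  unfold dTV mixture
  calc 1 / 2 * ∑ b, |∑ a, w a * K a b - ∑ a, w a * L a b|
      = 1 / 2 * ∑ b, |∑ a, w a * (K a b - L a b)| := by simp only [mul_sub, sum_sub_distrib]
    _ ≤ 1 / 2 * ∑ b, ∑ a, w a * |K a b - L a b| := by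
        gcongr with b
        refine (abs_sum_le_sum_abs _ _).trans_eq (sum_congr rfl fun a _ => ?_)
        rw [abs_mul, abs_of_nonneg (hw a)]
    _ = ∑ a, w a * (1 / 2 * ∑ b, |K a b - L a b|) := by
        rw [sum_comm, mul_sum]
        simp only [mul_sum]
        exact sum_congr rfl fun _ _ => sum_congr rfl fun _ _ => by ring

end TotalVariation

section Pinsker

open InformationTheory Set

lemma three_mul_sq_sub_one_le_mul_klFun {t : ℝ} (ht : 0 ≤ t) :
    3 * (t - 1) ^ 2 ≤ 2 * (t + 2) * klFun t := by
  -- `F'' t = 4 (log t + t⁻¹ - 1) ≥ 0`, so `F` is convex and its critical point `1` is a minimum.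
  set F : ℝ → ℝ := fun t => 2 * (t + 2) * klFun t - 3 * (t - 1) ^ 2
  set F' : ℝ → ℝ := fun t => 4 * (t + 1) * log t - 8 * (t - 1)
  have hF : ∀ t, 0 < t → HasDerivAt F (F' t) t := by
    intro t ht
    have := ((((hasDerivAt_id' t).add_const 2).const_mul 2).mul (hasDerivAt_klFun ht.ne')).sub
      ((((hasDerivAt_id' t).sub_const 1).pow 2).const_mul 3)
    refine this.congr_deriv ?_
    simp only [F', klFun]
    ring
  have hF' : ∀ t, 0 < t → HasDerivAt F' (4 * (log t + t⁻¹ - 1)) t := by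
    intro t ht
    have := ((((hasDerivAt_id' t).add_const 1).const_mul 4).mul (hasDerivAt_log ht.ne')).sub
      (((hasDerivAt_id' t).sub_const 1).const_mul 8)
    refine this.congr_deriv ?_
    field_simp
    ring
  have hconv : ConvexOn ℝ (Ici 0) F := by
    refine convexOn_of_hasDerivWithinAt2_nonneg (convex_Ici 0) ?_
      (fun x hx => (hF x (by simpa using hx)).hasDerivWithinAt)
      (fun x hx => (hF' x (by simpa using hx)).hasDerivWithinAt) fun x hx => ?_
    · exact ((continuous_const.mul (continuous_id.add continuous_const)).mul continuous_klFun
        |>.sub (by fun_prop)).continuousOn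
    · rw [interior_Ici, Set.mem_Ioi] at hx
      linarith [one_sub_inv_le_log_of_pos hx]
  have hmin : IsMinOn F (Ici 0) 1 := by
    refine hconv.isMinOn_of_rightDeriv_eq_zero (by simp) ?_
    rw [(hF 1 one_pos).hasDerivWithinAt.derivWithin (uniqueDiffWithinAt_Ioi 1)]
    simp [F']
  have : F 1 ≤ F t := hmin (Set.mem_Ici.2 ht)
  simp only [F, klFun_one] at this
  linarith

lemma mul_klFun_div (p : ℝ) {q : ℝ} (hq : q ≠ 0) :
    q * klFun (p / q) = p * log (p / q) - p + q := by
  rw [klFun]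
  field_simp
  ring

lemma mul_log_div_sub_add_nonneg {p q : ℝ} (hp : 0 ≤ p) (hq : 0 ≤ q) (habs : q = 0 → p = 0) :
    0 ≤ p * log (p / q) - p + q := by
  rcases hq.eq_or_lt with rfl | hq
  · simp [habs rfl]
  rw [← mul_klFun_div p hq.ne']
  exact mul_nonneg hq.le (klFun_nonneg (div_nonneg hp hq.le))

lemma three_mul_sq_sub_le_mul {p q : ℝ} (hp : 0 ≤ p) (hq : 0 ≤ q) (habs : q = 0 → p = 0) :
    3 * (p - q) ^ 2 ≤ 2 * (p + 2 * q) * (p * log (p / q) - p + q) := by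
  rcases hq.eq_or_lt with rfl | hq
  · simp [habs rfl]
  have e1 : 3 * (p - q) ^ 2 = q ^ 2 * (3 * (p / q - 1) ^ 2) := by field_simp
  have e2 : 2 * (p + 2 * q) * (q * klFun (p / q)) =
      q ^ 2 * (2 * (p / q + 2) * klFun (p / q)) := by
    field_simp
  rw [← mul_klFun_div p hq.ne', e1, e2]
  exact mul_le_mul_of_nonneg_left (three_mul_sq_sub_one_le_mul_klFun (div_nonneg hp hq.le))
    (sq_nonneg q)

theorem two_mul_dTV_sq_le_relEntropy {α : Type*} [Fintype α] {p q : α → ℝ} (hp : IsDist p)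
    (hq : IsDist q) (habs : ∀ x, q x = 0 → p x = 0) : 2 * dTV p q ^ 2 ≤ relEntropy p q := by
  have hCS : (∑ x, |p x - q x|) ^ 2 ≤
      (∑ x, (p x * log (p x / q x) - p x + q x)) * ∑ x, 2 * (p x + 2 * q x) / 3 :=
    sum_sq_le_sum_mul_sum_of_sq_le_mul _
      (fun x _ => mul_log_div_sub_add_nonneg (hp.1 x) (hq.1 x) (habs x))
      (fun x _ => by linarith [hp.1 x, hq.1 x]) fun x _ => by
        linarith [sq_abs (p x - q x), three_mul_sq_sub_le_mul (hp.1 x) (hq.1 x) (habs x)]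
  have hk : ∑ x, (p x * log (p x / q x) - p x + q x) = relEntropy p q := by
    rw [sum_add_distrib, sum_sub_distrib, hp.2, hq.2, relEntropy]
    ring
  have hw : ∑ x, 2 * (p x + 2 * q x) / 3 = 2 := by
    simp only [← sum_div, ← mul_sum, sum_add_distrib, hp.2, hq.2]
    norm_num
  rw [hk, hw] at hCS
  unfold dTV
  nlinarith

end Pinsker

section MutualInformation

variable {S V : Type*} [Fintype S] [Fintype V]

lemma mutualInfo_eq_sum_mul_relEntropy (w : V → ℝ) {μ : V → S → ℝ} (hμ : ∀ v, ∑ s, μ v s = 1) :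
    mutualInfo (fun p : S × V => w p.2 * μ p.2 p.1) =
      ∑ v, w v * relEntropy (μ v) (mixture w μ) := by
  unfold mutualInfo relEntropy
  rw [Fintype.sum_prod_type, sum_comm]
  refine sum_congr rfl fun v _ => ?_
  rw [mul_sum]
  refine sum_congr rfl fun s _ => ?_
  simp only [← mul_sum, hμ v, mul_one]
  split_ifs with h
  · rcases mul_eq_zero.1 h with h | h <;> simp [h]
  · rw [mul_comm _ (w v), mul_div_mul_left _ _ (left_ne_zero_of_mul h)]
    simp only [mixture]
    ring

lemma sum_mul_dTV_mixture_le_sqrt_mutualInfo {w : V → ℝ} {μ : V → S → ℝ} (hw : IsDist w)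
    (hμ : ∀ v, IsDist (μ v)) :
    ∑ v, w v * dTV (μ v) (mixture w μ) ≤
      √(mutualInfo (fun p : S × V => w p.2 * μ p.2 p.1) / 2) := by
  rw [mutualInfo_eq_sum_mul_relEntropy w fun v => (hμ v).2]
  have hpinsker : ∀ v, 0 < w v →
      2 * dTV (μ v) (mixture w μ) ^ 2 ≤ relEntropy (μ v) (mixture w μ) := by
    refine fun v hv => two_mul_dTV_sq_le_relEntropy (hμ v) (isDist_mixture hw hμ) fun s hs => ?_
    have := (sum_eq_zero_iff_of_nonneg fun a _ => mul_nonneg (hw.1 a) ((hμ a).1 s)).1 hs v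
      (mem_univ v)
    exact (mul_eq_zero.1 this).resolve_left hv.ne'
  refine (le_abs_self _).trans (abs_le_sqrt ?_)
  calc (∑ v, w v * dTV (μ v) (mixture w μ)) ^ 2
      ≤ (∑ v, w v) * ∑ v, w v * (relEntropy (μ v) (mixture w μ) / 2) := by
        refine sum_sq_le_sum_mul_sum_of_sq_le_mul _ (fun v _ => hw.1 v) (fun v _ => ?_)
          fun v _ => ?_
        all_goals
          rcases (hw.1 v).eq_or_lt with h | h
          · simp [← h]
          · nlinarith [hpinsker v h, sq_nonneg (dTV (μ v) (mixture w μ)), sq_nonneg (w v)]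
    _ = (∑ v, w v * relEntropy (μ v) (mixture w μ)) / 2 := by
        rw [hw.2, one_mul, sum_div]
        simp only [mul_div_assoc]

end MutualInformation

section OnlineAlgorithm

variable {X S : Type*} [Fintype X] [Fintype S] {M1 : X → S → ℝ} {Mst : ℕ → S → X → S → ℝ}

lemma stateDist_zero (q : ℕ → X → ℝ) : stateDist M1 Mst q 0 = mixture (q 0) M1 := rfl

lemma stateDist_succ (q : ℕ → X → ℝ) (i : ℕ) :
    stateDist M1 Mst q (i + 1) =
      mixture (stateDist M1 Mst q i) fun s' => mixture (q (i + 1)) (Mst (i + 1) s') := rfl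

lemma stateDist_congr {q₁ q₂ : ℕ → X → ℝ} {i : ℕ} (h : ∀ j ≤ i, q₁ j = q₂ j) :
    stateDist M1 Mst q₁ i = stateDist M1 Mst q₂ i := by
  induction i with
  | zero => rw [stateDist_zero, stateDist_zero, h 0 le_rfl]
  | succ i ih =>
    rw [stateDist_succ, stateDist_succ, ih fun j hj => h j (by omega), h (i + 1) le_rfl]

lemma isDist_stateDist (hM1 : ∀ x, IsDist (M1 x)) (hMst : ∀ i s x, IsDist (Mst i s x))
    {q : ℕ → X → ℝ} {i : ℕ} (hq : ∀ j ≤ i, IsDist (q j)) : IsDist (stateDist M1 Mst q i) := by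
  induction i with
  | zero => exact isDist_mixture (hq 0 le_rfl) hM1
  | succ i ih =>
    exact isDist_mixture (ih fun j hj => hq j (by omega))
      fun s' => isDist_mixture (hq (i + 1) le_rfl) (hMst (i + 1) s')

lemma dTV_stateDist_le (hMst : ∀ i s x, IsDist (Mst i s x)) {q₁ q₂ : ℕ → X → ℝ} {k i : ℕ}
    (hq : ∀ j, k < j → q₁ j = q₂ j) (hq₁ : ∀ j, k < j → IsDist (q₁ j)) (hki : k ≤ i) :
    dTV (stateDist M1 Mst q₁ i) (stateDist M1 Mst q₂ i) ≤
      dTV (stateDist M1 Mst q₁ k) (stateDist M1 Mst q₂ k) := by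
  induction i, hki using Nat.le_induction with
  | base => exact le_rfl
  | succ i hki ih =>
    rw [stateDist_succ, stateDist_succ, ← hq (i + 1) (by omega)]
    exact (dTV_mixture_le _ _ fun s' => isDist_mixture (hq₁ (i + 1) (by omega))
      (hMst (i + 1) s')).trans ih

lemma stateDist_eq_mixture [DecidableEq X] {q q' : ℕ → X → ℝ} {i : ℕ}
    (h : ∀ j < i, q j = q' j) :
    stateDist M1 Mst q i = mixture (q i) fun x => stateDist M1 Mst
      (fun j => if j = i then (fun x' => if x' = x then (1 : ℝ) else 0) else q' j) i := by
  cases i with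
  | zero => simp only [stateDist_zero, if_true, mixture_indicator]
  | succ i =>
    have hprev (x : X) : stateDist M1 Mst
        (fun j => if j = i + 1 then (fun x' => if x' = x then (1 : ℝ) else 0) else q' j) i =
        stateDist M1 Mst q i :=
      stateDist_congr fun j hj => by rw [if_neg (by omega), h j (by omega)]
    simp only [stateDist_succ, hprev, if_true, mixture_indicator]
    exact mixture_comm _ _ _

end OnlineAlgorithm

theorem stmt_11_general {X S O V : Type*} [Fintype X] [Fintype S] [Fintype O] [Fintype V]
    [Nonempty V] [DecidableEq X]
    (n : ℕ) (hn : 1 ≤ n)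
    (M1 : X → S → ℝ) (hM1 : ∀ x, IsDist (M1 x))
    (Mst : ℕ → S → X → S → ℝ) (hMst : ∀ i s x, IsDist (Mst i s x))
    (Mout : S → O → ℝ) (hMout : ∀ s, IsDist (Mout s))
    (P : V → X → ℝ) (hP : ∀ v, IsDist (P v))
    (U : X → ℝ) (hU : U = fun x => (1 / (Fintype.card V : ℝ)) * ∑ v, P v x)
    (I₀ : ℝ)
    (hinfo : ∀ i < n, mutualInfo (fun p : S × V =>
        (1 / (Fintype.card V : ℝ)) * ∑ x, P p.2 x *
          stateDist M1 Mst
            (fun j => if j = i then (fun x' => if x' = x then (1 : ℝ) else 0)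
              else U) i p.1) ≤ I₀) :
    dTV
      (fun o => (1 / (Fintype.card V : ℝ)) * ∑ v,
        ∑ s, stateDist M1 Mst (fun _ => P v) (n - 1) s * Mout s o)
      (fun o => ∑ s, stateDist M1 Mst (fun _ => U) (n - 1) s * Mout s o) ≤
      n * Real.sqrt (I₀ / 2) := by
  set u : V → ℝ := fun _ => 1 / (Fintype.card V : ℝ)
  have hu : IsDist u := isDist_uniform
  have hUu : U = mixture u P := by rw [hU]; funext x; simp only [mixture, mul_sum]; rfl
  have hUdist : IsDist U := hUu ▸ isDist_mixture hu hP
  set q : ℕ → V → ℕ → X → ℝ := fun k v j => if j < k then U else P v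
  set H : ℕ → O → ℝ := fun k => mixture u fun v => mixture (stateDist M1 Mst (q k v) (n - 1)) Mout
  have hH0 : H 0 = fun o => (1 / (Fintype.card V : ℝ)) * ∑ v,
      ∑ s, stateDist M1 Mst (fun _ => P v) (n - 1) s * Mout s o := by
    funext o
    simp only [H, q, mixture, Nat.not_lt_zero, if_false, mul_sum]
    rfl
  have hHn : H n = fun o => ∑ s, stateDist M1 Mst (fun _ => U) (n - 1) s * Mout s o := by
    have (v : V) : stateDist M1 Mst (q n v) (n - 1) = stateDist M1 Mst (fun _ => U) (n - 1) :=
      stateDist_congr fun j hj => if_pos (by omega)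
    funext o
    simp only [H, this, mixture, ← sum_mul, hu.2, one_mul]
  rw [← hH0, ← hHn]
  refine dTV_le_mul_of_dTV_succ_le H n _ fun k hk => ?_
  set g : X → S → ℝ := fun x => stateDist M1 Mst
    (fun j => if j = k then (fun x' => if x' = x then (1 : ℝ) else 0) else U) k
  set μ : V → S → ℝ := fun v => mixture (P v) g
  have hμ (v : V) : IsDist (μ v) := by
    refine isDist_mixture (hP v) fun x => isDist_stateDist hM1 hMst fun j _ => ?_
    split_ifs
    · exact ⟨fun _ => ite_nonneg zero_le_one le_rfl, by simp⟩
    · exact hUdist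
  have hqk (v : V) : stateDist M1 Mst (q k v) k = μ v := by
    rw [stateDist_eq_mixture (q' := fun _ => U) fun j hj => if_pos hj]
    simp [μ, g]
  have hqk1 (v : V) : stateDist M1 Mst (q (k + 1) v) k = mixture u μ := by
    rw [stateDist_eq_mixture (q' := fun _ => U) fun j hj => if_pos (by omega)]
    change mixture (if k < k + 1 then U else P v) g = _
    rw [if_pos (lt_add_one k), hUu]
    exact mixture_mixture u P g
  calc dTV (H k) (H (k + 1))
      ≤ ∑ v, u v * dTV (mixture (stateDist M1 Mst (q k v) (n - 1)) Mout)
          (mixture (stateDist M1 Mst (q (k + 1) v) (n - 1)) Mout) :=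
        dTV_mixture_mixture_le hu.1 _ _
    _ ≤ ∑ v, u v * dTV (stateDist M1 Mst (q k v) k) (stateDist M1 Mst (q (k + 1) v) k) := by
        refine sum_le_sum fun v _ => mul_le_mul_of_nonneg_left ?_ (hu.1 v)
        refine (dTV_mixture_le _ _ hMout).trans (dTV_stateDist_le hMst (fun j hj => ?_)
          (fun j hj => ?_) (by omega))
        · simp only [q, if_neg (by omega : ¬j < k), if_neg (by omega : ¬j < k + 1)]
        · simp only [q, if_neg (by omega : ¬j < k)]
          exact hP v
    _ = ∑ v, u v * dTV (μ v) (mixture u μ) := by simp only [hqk, hqk1]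
    _ ≤ √(mutualInfo (fun p : S × V => u p.2 * μ p.2 p.1) / 2) :=
        sum_mul_dTV_mixture_le_sqrt_mutualInfo hu hμ
    _ ≤ √(I₀ / 2) := by gcongr; exact hinfo k hk

/-- Hybrid-argument bound: if each per-step state map (earlier inputs i.i.d. from the
uniform mixture `U`, current input `x`) has mutual information at most `I₀` with `V`
when the current input is drawn from `P_V`, then
`dTV(M(P_V^n), M(U^n)) ≤ n·√(I₀/2)`. -/
theorem stmt_11 {X S O V : Type*} [Fintype X] [Fintype S] [Fintype O] [Fintype V]
    [Nonempty V] [DecidableEq X]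
    (n : ℕ) (hn : 1 ≤ n)
    (M1 : X → S → ℝ) (hM1 : ∀ x, IsDist (M1 x))
    (Mst : ℕ → S → X → S → ℝ) (hMst : ∀ i s x, IsDist (Mst i s x))
    (Mout : S → O → ℝ) (hMout : ∀ s, IsDist (Mout s))
    (P : V → X → ℝ) (hP : ∀ v, IsDist (P v))
    (U : X → ℝ) (hU : U = fun x => (1 / (Fintype.card V : ℝ)) * ∑ v, P v x)
    (I₀ : ℝ) (hI₀ : 0 ≤ I₀)
    (hinfo : ∀ i < n, mutualInfo (fun p : S × V =>
        (1 / (Fintype.card V : ℝ)) * ∑ x, P p.2 x *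
          stateDist M1 Mst
            (fun j => if j = i then (fun x' => if x' = x then (1 : ℝ) else 0)
              else U) i p.1) ≤ I₀) :
    dTV
      (fun o => (1 / (Fintype.card V : ℝ)) * ∑ v,
        ∑ s, stateDist M1 Mst (fun _ => P v) (n - 1) s * Mout s o)
      (fun o => ∑ s, stateDist M1 Mst (fun _ => U) (n - 1) s * Mout s o) ≤
      n * Real.sqrt (I₀ / 2) :=
  stmt_11_general n hn M1 hM1 Mst hMst Mout hMout P hP U hU I₀ hinfo
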